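/- Let K be a finite-dimensional abstract simplicial complex. The map φ sending a formal convex combination ∑ᵢ tᵢ σᵢ over a chain σ₀ ⊊ σ₁ ⊊ ... ⊊ σ_d of faces of K to ∑ᵢ tᵢ χ_{σᵢ} ∈ ℝ^{(V(K))} is a bijection from the geometric realization of the order complex of the face poset F(K) onto the cubical cone CC(K) = ∪_{σ∈K} I^σ. -/

import Mathlib

/-- An abstract simplicial complex on a vertex type `V`: a family of finite subsets of `V`
closed under taking subsets. -/
structure ASC (V : Type*) where
  faces : Set (Finset V)
  down_closed : ∀ ⦃σ τ : Finset V⦄, σ ∈ faces → τ ⊆ σ → τ ∈ faces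

/-- The indicator vector `χ_σ = ∑_{v ∈ σ} v` in the free real vector space on `V`. -/
noncomputable def chi {V : Type*} (σ : Finset V) : V →₀ ℝ :=
  σ.sum fun v => Finsupp.single v 1

/-- The cubical cone `CC(K) = ∪_{σ ∈ K} I^σ`, where
`I^σ = {∑_{v ∈ σ} t_v v : t_v ∈ [0,1]}`. -/
def CC {V : Type*} (K : ASC V) : Set (V →₀ ℝ) :=
  {f | ∃ σ ∈ K.faces, f.support ⊆ σ ∧ ∀ v : V, 0 ≤ f v ∧ f v ≤ 1}

/-- The geometric realization of the order complex of the face poset `F(K)`: formal convex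
combinations of faces of `K` supported on a chain (w.r.t. inclusion). -/
def GRFaceposet {V : Type*} (K : ASC V) : Set (Finset V →₀ ℝ) :=
  {t | (∀ σ : Finset V, 0 ≤ t σ) ∧ (t.sum fun _ c => c) = 1 ∧
    (∀ σ ∈ t.support, σ ∈ K.faces) ∧ IsChain (· ⊆ ·) (↑t.support : Set (Finset V))}

/-- The map `φ` sending a formal convex combination `∑ tᵢ σᵢ` to `∑ tᵢ χ_{σᵢ}`. -/
noncomputable def phiCC {V : Type*} (t : Finset V →₀ ℝ) : V →₀ ℝ :=
  t.sum fun σ c => c • chi σ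

/-!
Write `φ(t) v = ∑_{σ ∋ v} t σ`. For weights on a chain of nonempty faces with greatest face `σ`,
the support of `φ(t)` is `σ`, and the minimum of `φ(t)` on `σ` is `t σ`: it is attained at a
vertex of `σ` outside the next smaller face of the chain. So `φ(t)` determines the greatest face
and its weight, and peeling them off gives injectivity by induction. Conversely, a point `f` of
`CC(K)` decomposes as `a • χ_{supp f} + f'` with `a` the least positive value of `f` and
`supp f' ⊊ supp f`, which yields a preimage by induction. The empty face contributes
`χ_∅ = 0`, so it absorbs the remaining mass of a convex combination.
-/

section

variable {α : Type*} [PartialOrder α] {s : Finset α}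

theorem Finset.exists_isGreatest_of_isChain (hs : IsChain (· ≤ ·) (s : Set α))
    (hne : s.Nonempty) : ∃ a, IsGreatest (s : Set α) a := by
  obtain ⟨a, ha⟩ := s.exists_maximal hne
  refine ⟨a, ha.1, fun b hb => ?_⟩
  rcases eq_or_ne b a with rfl | hba
  · exact le_rfl
  · exact (hs hb ha.1 hba).elim id fun hab => ha.2 hb hab

theorem Finset.exists_isLeast_of_isChain (hs : IsChain (· ≤ ·) (s : Set α))
    (hne : s.Nonempty) : ∃ a, IsLeast (s : Set α) a := by
  obtain ⟨a, ha⟩ := s.exists_minimal hne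
  refine ⟨a, ha.1, fun b hb => ?_⟩
  rcases eq_or_ne b a with rfl | hba
  · exact le_rfl
  · exact (hs hb ha.1 hba).elim (fun hba => ha.2 hb hba) id

theorem Finsupp.sum_add_single {ι M : Type*} [AddCommMonoid M] (t : ι →₀ M) (i : ι) (m : M) :
    ((t + Finsupp.single i m).sum fun _ c => c) = (t.sum fun _ c => c) + m := by
  rw [Finsupp.sum_add_index' (fun _ => rfl) fun _ _ _ => rfl, Finsupp.sum_single_index rfl]

theorem Finsupp.support_add_single_subset {ι M : Type*} [DecidableEq ι] [AddZeroClass M]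
    (t : ι →₀ M) (i : ι) (m : M) :
    (t + Finsupp.single i m).support ⊆ insert i t.support := by
  refine Finsupp.support_add.trans fun j hj => ?_
  rcases Finset.mem_union.1 hj with hj | hj
  · exact Finset.mem_insert_of_mem hj
  · rw [Finset.mem_singleton.1 (Finsupp.support_single_subset hj)]
    exact Finset.mem_insert_self i _

end

section

variable {V : Type*}

theorem chi_apply [DecidableEq V] (σ : Finset V) (v : V) :
    chi σ v = if v ∈ σ then 1 else 0 := by
  simp [chi, Finsupp.finsetSum_apply, Finsupp.single_apply]

@[simp]
theorem chi_empty : chi (∅ : Finset V) = 0 := by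
  simp [chi]

@[simp]
theorem phiCC_zero : phiCC (0 : Finset V →₀ ℝ) = 0 := by
  simp [phiCC]

theorem phiCC_add_single (t : Finset V →₀ ℝ) (σ : Finset V) (a : ℝ) :
    phiCC (t + Finsupp.single σ a) = phiCC t + a • chi σ := by
  simp only [phiCC, ← Finsupp.linearCombination_apply, map_add,
    Finsupp.linearCombination_single]

theorem phiCC_erase (t : Finset V →₀ ℝ) (σ : Finset V) :
    phiCC (t.erase σ) = phiCC t - t σ • chi σ := by
  rw [eq_sub_iff_add_eq, ← phiCC_add_single, Finsupp.erase_add_single]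

theorem phiCC_apply [DecidableEq V] (t : Finset V →₀ ℝ) (v : V) :
    phiCC t v = ∑ σ ∈ t.support with v ∈ σ, t σ := by
  simp [phiCC, Finsupp.sum, Finsupp.finsetSum_apply, chi_apply, Finset.sum_filter]

theorem phiCC_apply_nonneg {t : Finset V →₀ ℝ} (ht : ∀ σ, 0 ≤ t σ) (v : V) : 0 ≤ phiCC t v := by
  classical
  rw [phiCC_apply]
  exact Finset.sum_nonneg fun σ _ => ht σ

theorem phiCC_apply_le_sum {t : Finset V →₀ ℝ} (ht : ∀ σ, 0 ≤ t σ) (v : V) : phiCC t v ≤ t.sum fun _ c => c := by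
  classical
  rw [phiCC_apply]
  exact Finset.sum_le_sum_of_subset_of_nonneg (Finset.filter_subset _ _) fun σ _ _ => ht σ

theorem mem_support_phiCC {t : Finset V →₀ ℝ} (ht : ∀ σ, 0 ≤ t σ) {v : V} : v ∈ (phiCC t).support ↔ ∃ σ ∈ t.support, v ∈ σ := by
  classical
  rw [Finsupp.mem_support_iff, phiCC_apply, Ne,
    Finset.sum_eq_zero_iff_of_nonneg fun σ _ => ht σ]
  simp only [Finset.mem_filter, Finsupp.mem_support_iff]
  grind

theorem subset_support_phiCC {t : Finset V →₀ ℝ} (ht : ∀ σ, 0 ≤ t σ) {σ : Finset V}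
    (hσ : σ ∈ t.support) : σ ⊆ (phiCC t).support :=
  fun _ hv => (mem_support_phiCC ht).2 ⟨σ, hσ, hv⟩

theorem support_phiCC_of_isGreatest {t : Finset V →₀ ℝ} (ht : ∀ σ, 0 ≤ t σ) {σ : Finset V}
    (hσ : IsGreatest (t.support : Set (Finset V)) σ) : (phiCC t).support = σ := by
  ext v
  rw [mem_support_phiCC ht]
  exact ⟨fun ⟨τ, hτ, hv⟩ => hσ.2 hτ hv, fun hv => ⟨σ, hσ.1, hv⟩⟩

/-- Up to normalization, a point of the realization of the order complex of the nonempty faces. -/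
structure IsChainWeight (t : Finset V →₀ ℝ) : Prop where
  nonneg : ∀ σ, 0 ≤ t σ
  isChain : IsChain (· ⊆ ·) (t.support : Set (Finset V))
  empty_notMem : ∅ ∉ t.support

theorem isChainWeight_zero : IsChainWeight (0 : Finset V →₀ ℝ) :=
  ⟨fun _ => le_rfl, by simp [IsChain], by simp⟩

theorem isChainWeight_erase {t : Finset V →₀ ℝ} (hnonneg : ∀ σ, 0 ≤ t σ)
    (hchain : IsChain (· ⊆ ·) (t.support : Set (Finset V))) {σ : Finset V}
    (hσ : ∅ ∈ t.support → σ = ∅) : IsChainWeight (t.erase σ) := by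
  classical
  refine ⟨fun τ => ?_, hchain.mono ?_, fun h => ?_⟩
  · rw [Finsupp.erase_apply]
    split_ifs
    exacts [le_rfl, hnonneg τ]
  · simp [Finsupp.support_erase]
  · rw [Finsupp.support_erase, Finset.mem_erase] at h
    exact h.1 (hσ h.2).symm

namespace IsChainWeight

variable {t t' : Finset V →₀ ℝ}

theorem erase (ht : IsChainWeight t) (σ : Finset V) : IsChainWeight (t.erase σ) :=
  isChainWeight_erase ht.nonneg ht.isChain fun h => absurd h ht.empty_notMem

theorem add_single (ht : IsChainWeight t) {σ : Finset V} (hσ : σ.Nonempty) {a : ℝ} (ha : 0 ≤ a)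
    (hsub : ∀ τ ∈ t.support, τ ⊆ σ) : IsChainWeight (t + Finsupp.single σ a) := by
  classical
  have hsupp := Finsupp.support_add_single_subset t σ a
  refine ⟨fun τ => add_nonneg (ht.nonneg τ) (Finsupp.single_nonneg.2 ha τ), ?_, fun h => ?_⟩
  · refine (ht.isChain.insert fun τ hτ _ => Or.inr (hsub τ hτ)).mono ?_
    exact_mod_cast hsupp
  · rcases Finset.mem_insert.1 (hsupp h) with h | h
    · exact hσ.ne_empty h.symm
    · exact ht.empty_notMem h

theorem exists_isGreatest (ht : IsChainWeight t) (h0 : t ≠ 0) :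
    ∃ σ, IsGreatest (t.support : Set (Finset V)) σ :=
  Finset.exists_isGreatest_of_isChain ht.isChain (Finsupp.support_nonempty_iff.2 h0)

theorem nonempty_of_mem (ht : IsChainWeight t) {σ : Finset V} (hσ : σ ∈ t.support) :
    σ.Nonempty :=
  Finset.nonempty_iff_ne_empty.2 fun h => ht.empty_notMem (h ▸ hσ)

theorem phiCC_eq_zero_iff (ht : IsChainWeight t) : phiCC t = 0 ↔ t = 0 := by
  refine ⟨fun h => by_contra fun h0 => ?_, fun h => h ▸ phiCC_zero⟩
  obtain ⟨σ, hσ⟩ := Finsupp.support_nonempty_iff.2 h0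
  obtain ⟨v, hv⟩ := ht.nonempty_of_mem hσ
  simpa [h] using subset_support_phiCC ht.nonneg hσ hv

theorem exists_mem_forall_mem_eq_of_isGreatest (ht : IsChainWeight t) {σ : Finset V}
    (hσ : IsGreatest (t.support : Set (Finset V)) σ) :
    ∃ v ∈ σ, ∀ τ ∈ t.support, v ∈ τ → τ = σ := by
  classical
  rcases (t.support.erase σ).eq_empty_or_nonempty with hlow | hlow
  · obtain ⟨v, hv⟩ := ht.nonempty_of_mem hσ.1
    refine ⟨v, hv, fun τ hτ _ => by_contra fun hne => ?_⟩
    simpa [hlow] using Finset.mem_erase.2 ⟨hne, hτ⟩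
  have hchain : IsChain (· ⊆ ·) ((t.support.erase σ : Finset _) : Set (Finset V)) :=
    ht.isChain.mono (by simp)
  -- `τ` is the second largest face of the chain
  obtain ⟨τ, hτ⟩ := Finset.exists_isGreatest_of_isChain hchain hlow
  obtain ⟨hτσ, hτt⟩ := Finset.mem_erase.1 hτ.1
  obtain ⟨v, hvσ, hvτ⟩ :=
    Finset.exists_of_ssubset (Finset.ssubset_iff_subset_ne.2 ⟨hσ.2 hτt, hτσ⟩)
  refine ⟨v, hvσ, fun ρ hρ hvρ => by_contra fun hne => hvτ ?_⟩
  exact hτ.2 (Finset.mem_erase.2 ⟨hne, hρ⟩) hvρ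

theorem isLeast_image_phiCC (ht : IsChainWeight t) {σ : Finset V}
    (hσ : IsGreatest (t.support : Set (Finset V)) σ) : IsLeast (phiCC t '' σ) (t σ) := by
  classical
  obtain ⟨v, hvσ, hv⟩ := ht.exists_mem_forall_mem_eq_of_isGreatest hσ
  refine ⟨⟨v, hvσ, ?_⟩, ?_⟩
  · rw [phiCC_apply]
    refine Finset.sum_eq_single_of_mem σ (Finset.mem_filter.2 ⟨hσ.1, hvσ⟩) fun τ hτ hne => ?_
    exact absurd (hv τ (Finset.mem_filter.1 hτ).1 (Finset.mem_filter.1 hτ).2) hne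
  · rintro _ ⟨w, hw, rfl⟩
    rw [phiCC_apply]
    exact Finset.single_le_sum (fun τ _ => ht.nonneg τ) (Finset.mem_filter.2 ⟨hσ.1, hw⟩)

theorem exists_phiCC_apply_eq_sum (ht : IsChainWeight t) (h0 : t ≠ 0) :
    ∃ v, phiCC t v = t.sum fun _ c => c := by
  classical
  obtain ⟨σ, hσ⟩ :=
    Finset.exists_isLeast_of_isChain ht.isChain (Finsupp.support_nonempty_iff.2 h0)
  obtain ⟨v, hv⟩ := ht.nonempty_of_mem hσ.1
  refine ⟨v, ?_⟩
  rw [phiCC_apply, Finset.filter_true_of_mem fun τ hτ => hσ.2 hτ hv]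
  rfl

theorem eq_of_phiCC_eq (ht : IsChainWeight t) (ht' : IsChainWeight t')
    (h : phiCC t = phiCC t') : t = t' := by
  classical
  induction hn : t.support.card generalizing t t' with
  | zero =>
    obtain rfl := Finsupp.card_support_eq_zero.1 hn
    exact (ht'.phiCC_eq_zero_iff.1 (h ▸ phiCC_zero)).symm
  | succ n ih =>
    have h0 : t ≠ 0 := by rintro rfl; simp at hn
    have h0' : t' ≠ 0 := fun h0' => h0 (ht.phiCC_eq_zero_iff.1 (by rw [h, h0', phiCC_zero]))
    obtain ⟨σ, hσ⟩ := ht.exists_isGreatest h0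
    obtain ⟨σ', hσ'⟩ := ht'.exists_isGreatest h0'
    have hσσ' : σ' = σ := by
      rw [← support_phiCC_of_isGreatest ht'.nonneg hσ', ← h,
        support_phiCC_of_isGreatest ht.nonneg hσ]
    subst σ'
    have hweight : t σ = t' σ :=
      (ht.isLeast_image_phiCC hσ).unique (h ▸ ht'.isLeast_image_phiCC hσ')
    have herase : t.erase σ = t'.erase σ :=
      ih (ht.erase σ) (ht'.erase σ) (by rw [phiCC_erase, phiCC_erase, h, hweight])
        (by rw [Finsupp.support_erase, Finset.card_erase_of_mem hσ.1, hn, Nat.add_sub_cancel])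
    rw [← Finsupp.erase_add_single σ t, ← Finsupp.erase_add_single σ t', herase, hweight]

end IsChainWeight

theorem exists_isChainWeight_phiCC_eq (f : V →₀ ℝ) (hf : ∀ v, 0 ≤ f v) :
    ∃ t, IsChainWeight t ∧ phiCC t = f := by
  classical
  induction hn : f.support.card using Nat.strong_induction_on generalizing f with
  | _ n ih =>
  rcases f.support.eq_empty_or_nonempty with h0 | hne
  · exact ⟨0, isChainWeight_zero, by rw [phiCC_zero, Finsupp.support_eq_empty.1 h0]⟩
  obtain ⟨v₀, hv₀, hmin⟩ := f.support.exists_min_image f hne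
  set f' := f - f v₀ • chi f.support with hf'
  have hf'_apply (v : V) : f' v = if v ∈ f.support then f v - f v₀ else 0 := by
    split_ifs with hv
    · simp [hf', chi_apply, hv]
    · simp [hf', chi_apply, hv, Finsupp.notMem_support_iff.1 hv]
  have hf'_nonneg (v : V) : 0 ≤ f' v := by
    rw [hf'_apply]
    split_ifs with hv
    exacts [sub_nonneg.2 (hmin v hv), le_rfl]
  have hf'_support : f'.support ⊂ f.support := by
    refine Finset.ssubset_iff_subset_ne.2 ⟨fun v hv => by_contra fun hvf => ?_, fun heq => ?_⟩
    · simp [hf'_apply, hvf] at hv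
    · have : v₀ ∈ f'.support := heq ▸ hv₀
      simp [hf'_apply, hv₀] at this
  obtain ⟨t', ht', hφ⟩ := ih _ (hn ▸ Finset.card_lt_card hf'_support) f' hf'_nonneg rfl
  refine ⟨t' + Finsupp.single f.support (f v₀), ht'.add_single hne (hf v₀) fun τ hτ => ?_, ?_⟩
  · exact (hφ ▸ subset_support_phiCC ht'.nonneg hτ).trans hf'_support.subset
  · rw [phiCC_add_single, hφ, hf', sub_add_cancel]

noncomputable def withEmptyFace (u : Finset V →₀ ℝ) : Finset V →₀ ℝ :=
  u + Finsupp.single ∅ (1 - u.sum fun _ c => c)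

@[simp]
theorem phiCC_withEmptyFace (u : Finset V →₀ ℝ) : phiCC (withEmptyFace u) = phiCC u := by
  rw [withEmptyFace, phiCC_add_single, chi_empty, smul_zero, add_zero]

theorem withEmptyFace_erase_empty {K : ASC V} {t : Finset V →₀ ℝ} (ht : t ∈ GRFaceposet K) :
    withEmptyFace (t.erase ∅) = t := by
  have hmass := Finsupp.sum_add_single (t.erase ∅) ∅ (t ∅)
  rw [Finsupp.erase_add_single, ht.2.1] at hmass
  rw [withEmptyFace, hmass, add_sub_cancel_left, Finsupp.erase_add_single]

theorem withEmptyFace_mem_GRFaceposet {K : ASC V} {u : Finset V →₀ ℝ} (hu : IsChainWeight u)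
    {σ₀ : Finset V} (hσ₀ : σ₀ ∈ K.faces) (hsub : ∀ σ ∈ u.support, σ ⊆ σ₀)
    (hmass : (u.sum fun _ c => c) ≤ 1) : withEmptyFace u ∈ GRFaceposet K := by
  classical
  have hsupp := Finsupp.support_add_single_subset u ∅ (1 - u.sum fun _ c => c)
  refine ⟨fun σ => add_nonneg (hu.nonneg σ) (Finsupp.single_nonneg.2 (sub_nonneg.2 hmass) σ),
    by rw [withEmptyFace, Finsupp.sum_add_single, add_sub_cancel], fun σ hσ => ?_, ?_⟩
  · rcases Finset.mem_insert.1 (hsupp hσ) with rfl | hσ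
    · exact K.down_closed hσ₀ (Finset.empty_subset σ₀)
    · exact K.down_closed hσ₀ (hsub σ hσ)
  · refine (hu.isChain.insert fun τ _ _ => Or.inl (Finset.empty_subset τ)).mono ?_
    exact_mod_cast hsupp

theorem mapsTo_phiCC_GRFaceposet (K : ASC V) : Set.MapsTo phiCC (GRFaceposet K) (CC K) := by
  rintro t ⟨hnonneg, hmass, hfaces, hchain⟩
  have h0 : t.support.Nonempty := Finsupp.support_nonempty_iff.2 fun h => by simp [h] at hmass
  obtain ⟨σ, hσ⟩ := Finset.exists_isGreatest_of_isChain hchain h0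
  refine ⟨σ, hfaces σ hσ.1, (support_phiCC_of_isGreatest hnonneg hσ).subset, fun v => ?_⟩
  exact ⟨phiCC_apply_nonneg hnonneg v, hmass ▸ phiCC_apply_le_sum hnonneg v⟩

theorem injOn_phiCC_GRFaceposet (K : ASC V) : Set.InjOn phiCC (GRFaceposet K) := by
  intro t ht t' ht' h
  have hu := isChainWeight_erase ht.1 ht.2.2.2 fun _ => rfl
  have hu' := isChainWeight_erase ht'.1 ht'.2.2.2 fun _ => rfl
  rw [← withEmptyFace_erase_empty ht, ← withEmptyFace_erase_empty ht',
    hu.eq_of_phiCC_eq hu' (by simpa [phiCC_erase] using h)]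

theorem surjOn_phiCC_GRFaceposet (K : ASC V) : Set.SurjOn phiCC (GRFaceposet K) (CC K) := by
  rintro f ⟨σ₀, hσ₀, hsupp, hbound⟩
  obtain ⟨u, hu, rfl⟩ := exists_isChainWeight_phiCC_eq f fun v => (hbound v).1
  have hmass : (u.sum fun _ c => c) ≤ 1 := by
    rcases eq_or_ne u 0 with rfl | h0
    · simp
    · obtain ⟨v, hv⟩ := hu.exists_phiCC_apply_eq_sum h0
      exact hv ▸ (hbound v).2
  refine ⟨withEmptyFace u, withEmptyFace_mem_GRFaceposet hu hσ₀ ?_ hmass, phiCC_withEmptyFace u⟩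
  exact fun σ hσ => (subset_support_phiCC hu.nonneg hσ).trans hsupp

end

theorem stmt16_general {V : Type*} (K : ASC V) :
    Set.BijOn phiCC (GRFaceposet K) (CC K) :=
  ⟨mapsTo_phiCC_GRFaceposet K, injOn_phiCC_GRFaceposet K, surjOn_phiCC_GRFaceposet K⟩

/-- For a finite-dimensional abstract simplicial complex `K`, the map
`φ : ∑ᵢ tᵢ σᵢ ↦ ∑ᵢ tᵢ χ_{σᵢ}` is a bijection from the geometric realization of the order
complex of the face poset `F(K)` onto the cubical cone `CC(K)`. -/
theorem stmt16 {V : Type*} (K : ASC V)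
    (hfd : ∃ n : ℕ, ∀ σ ∈ K.faces, σ.card ≤ n) :
    Set.BijOn phiCC (GRFaceposet K) (CC K) :=
  stmt16_general K
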